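/- arXiv:1302.5021 — 3 statements merged into one kernel-verified Lean document; each statement's English description precedes it below -/
import Mathlib

section
/- If U, W are subspaces of V with U ⊄ W, then H_N(U|W) ≤ H_N(U | U ∩ W). -/
/-! Both sides have the same positive denominator, `dim (W + U) - dim W = dim U - dim (U ∩ W)`,
so it suffices to show `H(U | W) ≤ H(U | U ∩ W)`. The values of the variables in `U ∩ W` are a
function of those in `W`, so this is `H(X | Y) ≤ H(X | h(Y))`: the conditional mutual information
`I(X; Y | h(Y))` is nonnegative, which follows termwise from `log t ≤ t - 1`. -/

open scoped BigOperators

open Classical in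
/-- Base-2 Shannon entropy of the random variable `f` on the finite probability
space `(Ω, p)`. -/
noncomputable def mapEnt {Ω β : Type*} [Fintype Ω] [Fintype β]
    (p : Ω → ℝ) (f : Ω → β) : ℝ :=
  ∑ b : β, -((∑ ω ∈ Finset.univ.filter (fun ω => f ω = b), p ω) *
      Real.logb 2 (∑ ω ∈ Finset.univ.filter (fun ω => f ω = b), p ω))

open Classical in
/-- Entropy of a subspace `U` of the space of `F`-valued random variables on `Ω`:
the joint entropy of the collection of all random variables in `U` (equivalently,
of any generating set). -/
noncomputable def subEnt {F Ω : Type*} [Field F] [Fintype F] [Fintype Ω]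
    (p : Ω → ℝ) (U : Submodule F (Ω → F)) : ℝ :=
  mapEnt p (fun ω => (fun u : U => (u : Ω → F) ω))

/-- Normalized conditional entropy `H_N(U|W) = (H(W+U) - H(W)) / (dim(W+U) - dim W)`. -/
noncomputable def condNE {F Ω : Type*} [Field F] [Fintype F] [Fintype Ω]
    (p : Ω → ℝ) (U W : Submodule F (Ω → F)) : ℝ :=
  (subEnt p (W ⊔ U) - subEnt p W) /
    ((Module.finrank F ↥(W ⊔ U) : ℝ) - (Module.finrank F ↥W : ℝ))

open Finset Real Module

section Entropy

variable {Ω β γ δ : Type*} [Fintype Ω] (p : Ω → ℝ)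

open Classical in
noncomputable def law (f : Ω → β) (b : β) : ℝ :=
  ∑ ω with f ω = b, p ω

noncomputable def ent [Fintype β] (f : Ω → β) : ℝ :=
  ∑ b, negMulLog (law p f b)

lemma sum_law_mul [Fintype β] (f : Ω → β) (F : β → ℝ) :
    ∑ b, law p f b * F b = ∑ ω, p ω * F (f ω) := by
  classical
  rw [← sum_fiberwise univ f fun ω => p ω * F (f ω)]
  refine sum_congr rfl fun b _ => ?_
  rw [law, sum_mul]
  exact sum_congr rfl fun ω hω => by rw [(mem_filter.1 hω).2]

lemma sum_law [Fintype β] (f : Ω → β) : ∑ b, law p f b = ∑ ω, p ω := by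
  simpa using sum_law_mul p f 1

lemma sum_law_pair_left [Fintype β] (f : Ω → β) (g : Ω → γ) (y : γ) :
    ∑ x, law p (fun ω => (f ω, g ω)) (x, y) = law p g y := by
  classical
  rw [law, ← sum_fiberwise _ f p]
  refine sum_congr rfl fun x _ => ?_
  rw [law, filter_filter]
  exact sum_congr (by ext; simp [and_comm]) fun _ _ => rfl

lemma ent_eq_neg_sum [Fintype β] (f : Ω → β) :
    ent p f = -∑ ω, p ω * log (law p f (f ω)) := by
  simp only [ent, negMulLog, neg_mul, sum_neg_distrib, sum_law_mul p f fun b => log (law p f b)]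

lemma ent_comp_eq [Fintype β] [Fintype δ] (f : Ω → β) (k : β → δ) :
    ent p (fun ω => k (f ω)) = -∑ b, law p f b * log (law p (fun ω => k (f ω)) (k b)) := by
  rw [ent_eq_neg_sum, sum_law_mul]

lemma ent_congr [Fintype β] [Fintype γ] {f : Ω → β} {g : Ω → γ}
    (hfg : ∀ ω ω', f ω = f ω' ↔ g ω = g ω') : ent p f = ent p g := by
  classical
  have hlaw : ∀ ω, law p f (f ω) = law p g (g ω) := fun ω => by
    simp only [law, hfg]
  simp only [ent_eq_neg_sum, hlaw]

variable {p}

lemma law_nonneg (hp : ∀ ω, 0 ≤ p ω) (f : Ω → β) (b : β) : 0 ≤ law p f b :=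
  sum_nonneg fun ω _ => hp ω

lemma law_le_law_comp (hp : ∀ ω, 0 ≤ p ω) (f : Ω → β) (k : β → δ) (b : β) :
    law p f b ≤ law p (fun ω => k (f ω)) (k b) := by
  classical
  refine sum_le_sum_of_subset_of_nonneg (fun ω hω => ?_) fun ω _ _ => hp ω
  simp only [mem_filter, mem_univ, true_and] at hω ⊢
  rw [hω]

lemma mul_log_sub_log_le {t u : ℝ} (ht : 0 < t) (hu : 0 < u) :
    t * (log u - log t) ≤ u - t := by
  have hlog := log_le_sub_one_of_pos (div_pos hu ht)
  rw [log_div hu.ne' ht.ne'] at hlog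
  calc t * (log u - log t) ≤ t * (u / t - 1) := mul_le_mul_of_nonneg_left hlog ht.le
    _ = u - t := by field_simp

lemma mul_log_condIndep_le (hp : ∀ ω, 0 ≤ p ω) (f : Ω → β) (g : Ω → γ) (h : γ → δ)
    (q : β × γ) :
    law p (fun ω => (f ω, g ω)) q * (log (law p g q.2) +
        log (law p (fun ω => (f ω, h (g ω))) (q.1, h q.2)) -
        log (law p (fun ω => h (g ω)) (h q.2)) - log (law p (fun ω => (f ω, g ω)) q)) ≤
      law p g q.2 * law p (fun ω => (f ω, h (g ω))) (q.1, h q.2) /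
        law p (fun ω => h (g ω)) (h q.2) - law p (fun ω => (f ω, g ω)) q := by
  obtain ⟨x, y⟩ := q
  rcases (law_nonneg hp (fun ω => (f ω, g ω)) (x, y)).eq_or_lt with h0 | hpos
  · rw [← h0, zero_mul, sub_zero]
    exact div_nonneg (mul_nonneg (law_nonneg hp _ _) (law_nonneg hp _ _)) (law_nonneg hp _ _)
  · have hy : 0 < law p g y := hpos.trans_le (law_le_law_comp hp _ Prod.snd (x, y))
    have hxz : 0 < law p (fun ω => (f ω, h (g ω))) (x, h y) :=
      hpos.trans_le (law_le_law_comp hp _ (Prod.map id h) (x, y))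
    have hz : 0 < law p (fun ω => h (g ω)) (h y) := hy.trans_le (law_le_law_comp hp g h y)
    have key := mul_log_sub_log_le hpos (div_pos (mul_pos hy hxz) hz)
    rwa [log_div (mul_pos hy hxz).ne' hz.ne', log_mul hy.ne' hxz.ne'] at key

variable [Fintype β] [Fintype γ]

/-- With `X = f`, `Y = g`, `Z = h ∘ g`, the summand `P(y) P(x,z) / P(z)` is the law of `(X, Y)`
making `X` and `Y` conditionally independent given `Z`. -/
lemma sum_condIndep_le (hp : ∀ ω, 0 ≤ p ω) (f : Ω → β) (g : Ω → γ) (h : γ → δ) :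
    ∑ q : β × γ, law p g q.2 * law p (fun ω => (f ω, h (g ω))) (q.1, h q.2) /
      law p (fun ω => h (g ω)) (h q.2) ≤ ∑ ω, p ω := by
  rw [← univ_product_univ, sum_product_right, ← sum_law p g]
  refine sum_le_sum fun y _ => ?_
  simp_rw [mul_div_assoc, ← mul_sum, ← sum_div, sum_law_pair_left]
  rcases eq_or_ne (law p (fun ω => h (g ω)) (h y)) 0 with hz | hz
  · simp [hz, law_nonneg hp]
  · rw [div_self hz, mul_one]

theorem ent_pair_sub_ent_le_comp [Fintype δ] (hp : ∀ ω, 0 ≤ p ω) (f : Ω → β) (g : Ω → γ)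
    (h : γ → δ) :
    ent p (fun ω => (f ω, g ω)) - ent p g ≤
      ent p (fun ω => (f ω, h (g ω))) - ent p (fun ω => h (g ω)) := by
  have e1 : ent p (fun ω => (f ω, g ω)) = -∑ q, law p (fun ω => (f ω, g ω)) q *
      log (law p (fun ω => (f ω, g ω)) q) := ent_comp_eq p (fun ω => (f ω, g ω)) id
  have e2 : ent p g = -∑ q, law p (fun ω => (f ω, g ω)) q * log (law p g q.2) :=
    ent_comp_eq p (fun ω => (f ω, g ω)) Prod.snd
  have e3 : ent p (fun ω => (f ω, h (g ω))) = -∑ q, law p (fun ω => (f ω, g ω)) q *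
      log (law p (fun ω => (f ω, h (g ω))) (q.1, h q.2)) :=
    ent_comp_eq p (fun ω => (f ω, g ω)) (Prod.map id h)
  have e4 : ent p (fun ω => h (g ω)) = -∑ q, law p (fun ω => (f ω, g ω)) q *
      log (law p (fun ω => h (g ω)) (h q.2)) :=
    ent_comp_eq p (fun ω => (f ω, g ω)) fun q => h q.2
  have hsum := sum_le_sum (s := univ) fun q _ => mul_log_condIndep_le hp f g h q
  rw [sum_sub_distrib, sum_law] at hsum
  simp only [mul_sub, mul_add, sum_add_distrib, sum_sub_distrib] at hsum
  rw [e1, e2, e3, e4]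
  linarith [sum_condIndep_le hp f g h]

end Entropy

lemma mapEnt_eq_ent_div_log_two {Ω β : Type*} [Fintype Ω] [Fintype β] (p : Ω → ℝ)
    (f : Ω → β) : mapEnt p f = ent p f / log 2 := by
  rw [mapEnt, ent, sum_div]
  refine sum_congr rfl fun b _ => ?_
  rw [negMulLog, logb, law]
  ring

lemma Submodule.finrank_sup_sub_finrank {K V : Type*} [DivisionRing K] [AddCommGroup V]
    [Module K V] [FiniteDimensional K V] (U W : Submodule K V) :
    (finrank K ↥(W ⊔ U) : ℝ) - finrank K W = finrank K U - finrank K ↥(U ⊓ W) := by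
  have h : (finrank K ↥(W ⊔ U) : ℝ) + finrank K ↥(W ⊓ U) = finrank K W + finrank K U := by
    exact_mod_cast Submodule.finrank_sup_add_finrank_inf_eq W U
  rw [inf_comm] at h
  linarith

section Subspaces

variable {F Ω : Type*} [Field F]

def evalAt (U : Submodule F (Ω → F)) (ω : Ω) : U → F := fun u => (u : Ω → F) ω

lemma evalAt_eq_of_le {U V : Submodule F (Ω → F)} (hUV : U ≤ V) {ω ω' : Ω}
    (h : evalAt V ω = evalAt V ω') : evalAt U ω = evalAt U ω' :=
  funext fun u => congrFun h ⟨u, hUV u.2⟩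

lemma evalAt_sup_eq_iff {U W : Submodule F (Ω → F)} {ω ω' : Ω} :
    evalAt (W ⊔ U) ω = evalAt (W ⊔ U) ω' ↔
      evalAt W ω = evalAt W ω' ∧ evalAt U ω = evalAt U ω' := by
  refine ⟨fun h => ⟨evalAt_eq_of_le le_sup_left h, evalAt_eq_of_le le_sup_right h⟩,
    fun ⟨hW, hU⟩ => funext fun x => ?_⟩
  obtain ⟨w, hw, u, hu, hx⟩ := Submodule.mem_sup.1 x.2
  change (x : Ω → F) ω = (x : Ω → F) ω'
  rw [← hx, Pi.add_apply, Pi.add_apply]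
  exact congrArg₂ (· + ·) (congrFun hW ⟨w, hw⟩) (congrFun hU ⟨u, hu⟩)

variable [Fintype F] [Fintype Ω]

open Classical in
lemma subEnt_eq_ent (p : Ω → ℝ) (U : Submodule F (Ω → F)) :
    subEnt p U = ent p (evalAt U) / log 2 :=
  mapEnt_eq_ent_div_log_two p (evalAt U)

open Classical in
lemma ent_evalAt_pair (p : Ω → ℝ) (U W : Submodule F (Ω → F)) :
    ent p (fun ω => (evalAt U ω, evalAt W ω)) = ent p (evalAt (W ⊔ U)) :=
  ent_congr p fun ω ω' => by rw [Prod.ext_iff, evalAt_sup_eq_iff, and_comm]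

noncomputable def condEnt (p : Ω → ℝ) (U W : Submodule F (Ω → F)) : ℝ :=
  subEnt p (W ⊔ U) - subEnt p W

lemma condNE_eq_condEnt_div (p : Ω → ℝ) (U W : Submodule F (Ω → F)) :
    condNE p U W = condEnt p U W / ((finrank F ↥(W ⊔ U) : ℝ) - finrank F W) :=
  rfl

theorem condEnt_le_condEnt_of_le {p : Ω → ℝ} (hp : ∀ ω, 0 ≤ p ω) (U : Submodule F (Ω → F))
    {V W : Submodule F (Ω → F)} (hVW : V ≤ W) : condEnt p U W ≤ condEnt p U V := by
  classical
  have hent : ent p (fun ω => (evalAt U ω, evalAt W ω)) - ent p (evalAt W) ≤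
      ent p (fun ω => (evalAt U ω, evalAt V ω)) - ent p (evalAt V) :=
    ent_pair_sub_ent_le_comp hp (evalAt U) (evalAt W) fun φ (v : V) => φ ⟨v, hVW v.2⟩
  rw [ent_evalAt_pair, ent_evalAt_pair] at hent
  rw [condEnt, condEnt, subEnt_eq_ent, subEnt_eq_ent, subEnt_eq_ent, subEnt_eq_ent,
    div_sub_div_same, div_sub_div_same]
  exact div_le_div_of_nonneg_right hent (log_pos one_lt_two).le

end Subspaces

theorem stmt_4_general {F Ω : Type*} [Field F] [Fintype F] [Fintype Ω]
    (p : Ω → ℝ) (hp : ∀ ω, 0 ≤ p ω)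
    (U W : Submodule F (Ω → F)) (hUW : ¬ U ≤ W) :
    condNE p U W ≤ condNE p U (U ⊓ W) := by
  have hdim : (0 : ℝ) < finrank F U - finrank F ↥(U ⊓ W) :=
    sub_pos.2 (by exact_mod_cast Submodule.finrank_lt_finrank_of_lt (inf_lt_left.2 hUW))
  rw [condNE_eq_condEnt_div, condNE_eq_condEnt_div, Submodule.finrank_sup_sub_finrank U W,
    sup_eq_right.2 inf_le_left]
  exact div_le_div_of_nonneg_right (condEnt_le_condEnt_of_le hp U inf_le_right) hdim.le

/-- If `U ⊄ W`, then `H_N(U|W) ≤ H_N(U | U ∩ W)`. -/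
theorem stmt_4 {F Ω : Type*} [Field F] [Fintype F] [Fintype Ω]
    (p : Ω → ℝ) (hp : ∀ ω, 0 ≤ p ω) (hpsum : ∑ ω, p ω = 1)
    (U W : Submodule F (Ω → F)) (hUW : ¬ U ≤ W) :
    condNE p U W ≤ condNE p U (U ⊓ W) :=
  stmt_4_general p hp U W hUW
end

section
/- Fix a subspace W0 of V, and let S_{W0} be the set of subspaces U with W0 ⊊ U that minimize H_N(U|W0) over all subspaces strictly containing W0. Then S_{W0} is closed under subspace addition: if U1, U2 ∈ S_{W0} then U1 + U2 ∈ S_{W0}. -/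
open scoped BigOperators

open Classical in
noncomputable def pmass {Ω β : Type*} [Fintype Ω] (p : Ω → ℝ) (f : Ω → β) (b : β) : ℝ :=
  ∑ ω ∈ Finset.univ.filter (fun ω => f ω = b), p ω

open Classical in
lemma mapEnt_eq_sum {Ω β : Type*} [Fintype Ω] [Fintype β] (p : Ω → ℝ) (f : Ω → β) :
    mapEnt p f = ∑ ω, -(p ω * Real.logb 2 (pmass p f (f ω))) := by
  rw [mapEnt, ← Finset.sum_fiberwise Finset.univ f
    (fun ω => -(p ω * Real.logb 2 (pmass p f (f ω))))]
  refine Finset.sum_congr rfl fun b _ => ?_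
  have h1 : ∀ ω ∈ Finset.univ.filter (fun ω => f ω = b),
      -(p ω * Real.logb 2 (pmass p f (f ω))) = p ω * (-Real.logb 2 (pmass p f b)) := by
    intro ω hω; simp only [Finset.mem_filter] at hω; rw [hω.2]; ring
  rw [Finset.sum_congr rfl h1, ← Finset.sum_mul]
  show -(pmass p f b * Real.logb 2 (pmass p f b)) = pmass p f b * -Real.logb 2 (pmass p f b)
  ring

open Classical in
lemma pmass_nonneg {Ω β : Type*} [Fintype Ω] (p : Ω → ℝ) (hp : ∀ ω, 0 ≤ p ω)
    (f : Ω → β) (b : β) : 0 ≤ pmass p f b :=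
  Finset.sum_nonneg fun ω _ => hp ω

open Classical in
lemma le_pmass {Ω β : Type*} [Fintype Ω] (p : Ω → ℝ) (hp : ∀ ω, 0 ≤ p ω)
    (f : Ω → β) (ω : Ω) : p ω ≤ pmass p f (f ω) := by
  refine Finset.single_le_sum (fun ω' _ => hp ω') ?_
  simp

open Classical in
lemma pmass_le_of_coarser {Ω β γ : Type*} [Fintype Ω] (p : Ω → ℝ) (hp : ∀ ω, 0 ≤ p ω)
    {f : Ω → β} {g : Ω → γ} (h : ∀ ω ω', f ω = f ω' → g ω = g ω') (ω : Ω) :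
    pmass p f (f ω) ≤ pmass p g (g ω) := by
  refine Finset.sum_le_sum_of_subset_of_nonneg ?_ (fun ω' _ _ => hp ω')
  intro ω' hω'
  simp only [Finset.mem_filter, Finset.mem_univ, true_and] at hω' ⊢
  exact h ω' ω hω'

open Classical in
lemma mapEnt_le_of_coarser {Ω β γ : Type*} [Fintype Ω] [Fintype β] [Fintype γ]
    (p : Ω → ℝ) (hp : ∀ ω, 0 ≤ p ω)
    {f : Ω → β} {g : Ω → γ} (h : ∀ ω ω', f ω = f ω' → g ω = g ω') :
    mapEnt p g ≤ mapEnt p f := by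
  rw [mapEnt_eq_sum, mapEnt_eq_sum]
  refine Finset.sum_le_sum fun ω _ => ?_
  rw [neg_le_neg_iff]
  rcases eq_or_lt_of_le (hp ω) with h0 | h0
  · rw [← h0]; simp
  · exact mul_le_mul_of_nonneg_left (Real.logb_le_logb_of_le (by norm_num)
      (lt_of_lt_of_le h0 (le_pmass p hp f ω)) (pmass_le_of_coarser p hp h ω)) (hp ω)

open Classical in
lemma sum_pmass_eq {Ω β γ : Type*} [Fintype Ω] [Fintype β] (p : Ω → ℝ)
    (f : Ω → β) (k : Ω → γ) (hkf : ∀ ω ω', f ω = f ω' → k ω = k ω') (d : γ) :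
    ∑ a ∈ Finset.univ.filter (fun a => ∃ ω, f ω = a ∧ k ω = d), pmass p f a
      = pmass p k d := by
  unfold pmass
  have h2 := Finset.sum_fiberwise_eq_sum_filter (Finset.univ : Finset Ω)
    (Finset.univ.filter (fun a => ∃ ω, f ω = a ∧ k ω = d)) f p
  rw [h2]
  congr 1
  apply Finset.filter_congr
  intro ω _
  simp only [Finset.mem_filter, Finset.mem_univ, true_and]
  constructor
  · rintro ⟨ω', hf, hk⟩
    rw [← hk]
    exact hkf ω ω' hf.symm
  · intro h
    exact ⟨ω, rfl, h⟩

open Classical in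
lemma key_sum_le_one {Ω α β γ : Type*} [Fintype Ω] [Fintype α] [Fintype β] [Fintype γ]
    (p : Ω → ℝ) (hp : ∀ ω, 0 ≤ p ω) (hpsum : ∑ ω, p ω = 1)
    (f : Ω → α) (g : Ω → β) (k : Ω → γ)
    (hkf : ∀ ω ω', f ω = f ω' → k ω = k ω')
    (hkg : ∀ ω ω', g ω = g ω' → k ω = k ω') :
    ∑ ω, p ω * pmass p f (f ω) * pmass p g (g ω) /
        (pmass p (fun ω' => (f ω', g ω')) (f ω, g ω) * pmass p k (k ω)) ≤ 1 := by
  set h : Ω → α × β := fun ω' => (f ω', g ω') with hh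
  set t : Ω → ℝ := fun ω => p ω * pmass p f (f ω) * pmass p g (g ω) /
      (pmass p h (h ω) * pmass p k (k ω)) with ht
  have hone : ∑ d : γ, pmass p k d = 1 := by
    rw [← hpsum]
    exact Finset.sum_fiberwise Finset.univ k p
  have hsplit : ∑ ω, t ω = ∑ d : γ, ∑ ω ∈ Finset.univ.filter (fun ω => k ω = d), t ω :=
    (Finset.sum_fiberwise Finset.univ k t).symm
  rw [show ∑ ω, p ω * pmass p f (f ω) * pmass p g (g ω) /
        (pmass p h (f ω, g ω) * pmass p k (k ω)) = ∑ ω, t ω from rfl, hsplit, ← hone]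
  refine Finset.sum_le_sum fun d _ => ?_
  -- per-d bound
  set Kd := pmass p k d with hKd
  rcases eq_or_lt_of_le (pmass_nonneg p hp k d) with h0 | h0
  · -- Kd = 0 : all p on fiber vanish
    have hz : ∀ ω ∈ Finset.univ.filter (fun ω => k ω = d), p ω = 0 := by
      have := (Finset.sum_eq_zero_iff_of_nonneg
        (fun ω _ => hp ω) (s := Finset.univ.filter (fun ω => k ω = d))).1
      exact this h0.symm
    have : ∀ ω ∈ Finset.univ.filter (fun ω => k ω = d), t ω = 0 := by
      intro ω hω
      simp only [ht, hz ω hω, zero_mul, zero_div]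
    rw [Finset.sum_congr rfl this]
    simp only [Finset.sum_const_zero]
    rw [hKd, ← h0]
  · -- Kd > 0
    have hfiber : ∀ ω ∈ Finset.univ.filter (fun ω => k ω = d), pmass p k (k ω) = Kd := by
      intro ω hω
      simp only [Finset.mem_filter] at hω
      rw [hω.2]
    have step1 : ∑ ω ∈ Finset.univ.filter (fun ω => k ω = d), t ω
        = (∑ ω ∈ Finset.univ.filter (fun ω => k ω = d),
            p ω * pmass p f (f ω) * pmass p g (g ω) / pmass p h (h ω)) / Kd := by
      rw [Finset.sum_div]
      refine Finset.sum_congr rfl fun ω hω => ?_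
      rw [ht]
      simp only
      rw [hfiber ω hω, ← div_div]
    rw [step1, div_le_iff₀ h0]
    -- now bound the inner sum by Kd * Kd
    set Fd := Finset.univ.filter (fun a : α => ∃ ω, f ω = a ∧ k ω = d) with hFd
    set Gd := Finset.univ.filter (fun b : β => ∃ ω, g ω = b ∧ k ω = d) with hGd
    have hinner : ∑ ω ∈ Finset.univ.filter (fun ω => k ω = d),
        p ω * pmass p f (f ω) * pmass p g (g ω) / pmass p h (h ω)
        ≤ ∑ c ∈ Fd ×ˢ Gd, pmass p f c.1 * pmass p g c.2 := by
      rw [← Finset.sum_fiberwise (Finset.univ.filter (fun ω => k ω = d)) h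
        (fun ω => p ω * pmass p f (f ω) * pmass p g (g ω) / pmass p h (h ω))]
      rw [← Finset.sum_subset (Finset.subset_univ (Fd ×ˢ Gd))
        (f := fun c => ∑ ω ∈ (Finset.univ.filter (fun ω => k ω = d)).filter
          (fun ω => h ω = c), p ω * pmass p f (f ω) * pmass p g (g ω) / pmass p h (h ω)) ?_]
      · refine Finset.sum_le_sum fun c _ => ?_
        -- per-c bound
        have hmem : ∀ ω ∈ (Finset.univ.filter (fun ω => k ω = d)).filter (fun ω => h ω = c),
            p ω * pmass p f (f ω) * pmass p g (g ω) / pmass p h (h ω)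
            = p ω * (pmass p f c.1 * pmass p g c.2 / pmass p h c) := by
          intro ω hω
          simp only [Finset.mem_filter] at hω
          have h1 : f ω = c.1 := congrArg Prod.fst hω.2
          have h2 : g ω = c.2 := congrArg Prod.snd hω.2
          rw [h1, h2, hω.2]
          ring
        rw [Finset.sum_congr rfl hmem, ← Finset.sum_mul]
        set m := ∑ ω ∈ (Finset.univ.filter (fun ω => k ω = d)).filter (fun ω => h ω = c), p ω
          with hm
        have hm0 : 0 ≤ m := Finset.sum_nonneg fun ω _ => hp ω
        have hmM : m ≤ pmass p h c := by
          refine Finset.sum_le_sum_of_subset_of_nonneg ?_ (fun ω _ _ => hp ω)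
          intro ω hω
          simp only [Finset.mem_filter] at hω ⊢
          exact ⟨hω.1.1, hω.2⟩
        have hAB : 0 ≤ pmass p f c.1 * pmass p g c.2 :=
          mul_nonneg (pmass_nonneg p hp f c.1) (pmass_nonneg p hp g c.2)
        rcases eq_or_lt_of_le (pmass_nonneg p hp h c) with hM | hM
        · have : m = 0 := le_antisymm (hmM.trans hM.ge) hm0
          rw [this, zero_mul]
          exact hAB
        · calc m * (pmass p f c.1 * pmass p g c.2 / pmass p h c)
              ≤ pmass p h c * (pmass p f c.1 * pmass p g c.2 / pmass p h c) :=
                mul_le_mul_of_nonneg_right hmM (div_nonneg hAB (pmass_nonneg p hp h c))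
            _ = pmass p f c.1 * pmass p g c.2 := mul_div_cancel₀ _ (ne_of_gt hM)
      · -- zero off Fd ×ˢ Gd
        intro c _ hc
        have hempty : (Finset.univ.filter (fun ω => k ω = d)).filter (fun ω => h ω = c)
            = ∅ := by
          refine Finset.eq_empty_of_forall_notMem fun ω hω => ?_
          simp only [Finset.mem_filter, Finset.mem_univ, true_and] at hω
          refine hc ?_
          rw [Finset.mem_product]
          constructor
          · rw [hFd]
            simp only [Finset.mem_filter, Finset.mem_univ, true_and]
            exact ⟨ω, congrArg Prod.fst hω.2, hω.1⟩
          · rw [hGd]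
            simp only [Finset.mem_filter, Finset.mem_univ, true_and]
            exact ⟨ω, congrArg Prod.snd hω.2, hω.1⟩
        simp only [hempty, Finset.sum_empty]
    refine hinner.trans ?_
    rw [Finset.sum_product (f := fun c : α × β => pmass p f c.1 * pmass p g c.2)]
    have : ∑ a ∈ Fd, ∑ b ∈ Gd, pmass p f a * pmass p g b
        = (∑ a ∈ Fd, pmass p f a) * (∑ b ∈ Gd, pmass p g b) := by
      rw [Finset.sum_mul_sum]
    rw [this, sum_pmass_eq p f k hkf d, sum_pmass_eq p g k hkg d]

open Classical in
lemma mapEnt_submod {Ω α β γ : Type*} [Fintype Ω] [Fintype α] [Fintype β] [Fintype γ]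
    (p : Ω → ℝ) (hp : ∀ ω, 0 ≤ p ω) (hpsum : ∑ ω, p ω = 1)
    (f : Ω → α) (g : Ω → β) (k : Ω → γ)
    (hkf : ∀ ω ω', f ω = f ω' → k ω = k ω')
    (hkg : ∀ ω ω', g ω = g ω' → k ω = k ω') :
    mapEnt p (fun ω => (f ω, g ω)) + mapEnt p k ≤ mapEnt p f + mapEnt p g := by
  have hlog2 : (0:ℝ) < Real.log 2 := Real.log_pos (by norm_num)
  set r : Ω → ℝ := fun ω => p ω * pmass p f (f ω) * pmass p g (g ω) /
      (pmass p (fun ω' => (f ω', g ω')) (f ω, g ω) * pmass p k (k ω)) with hr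
  have key : ∑ ω, r ω ≤ 1 := key_sum_le_one p hp hpsum f g k hkf hkg
  have hterm : ∀ ω : Ω,
      -(p ω * Real.logb 2 (pmass p (fun ω' => (f ω', g ω')) ((fun ω' => (f ω', g ω')) ω)))
        + -(p ω * Real.logb 2 (pmass p k (k ω)))
      ≤ (-(p ω * Real.logb 2 (pmass p f (f ω))) + -(p ω * Real.logb 2 (pmass p g (g ω))))
        + (r ω - p ω) / Real.log 2 := by
    intro ω
    rcases eq_or_lt_of_le (hp ω) with hp0 | hp0
    · simp [hr, ← hp0]
    · set a := pmass p f (f ω) with hadef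
      set b := pmass p g (g ω) with hbdef
      set c := pmass p (fun ω' => (f ω', g ω')) ((fun ω' => (f ω', g ω')) ω) with hcdef
      set e := pmass p k (k ω) with hedef
      have ha : 0 < a := lt_of_lt_of_le hp0 (le_pmass p hp f ω)
      have hb : 0 < b := lt_of_lt_of_le hp0 (le_pmass p hp g ω)
      have hc : 0 < c := lt_of_lt_of_le hp0 (le_pmass p hp (fun ω' => (f ω', g ω')) ω)
      have he : 0 < e := lt_of_lt_of_le hp0 (le_pmass p hp k ω)
      set X := a * b / (c * e) with hXdef
      have hX : 0 < X := by positivity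
      have hlog : Real.log X ≤ X - 1 := Real.log_le_sub_one_of_pos hX
      have hL : Real.logb 2 a + Real.logb 2 b - Real.logb 2 c - Real.logb 2 e
          = Real.log X / Real.log 2 := by
        rw [hXdef, Real.log_div (by positivity) (by positivity),
          Real.log_mul ha.ne' hb.ne', Real.log_mul hc.ne' he.ne']
        simp only [Real.logb]
        ring
      have e2 : p ω * (Real.logb 2 a + Real.logb 2 b - Real.logb 2 c - Real.logb 2 e)
          = p ω * Real.log X / Real.log 2 := by rw [hL]; ring
      have e3 : p ω * Real.log X / Real.log 2 ≤ p ω * (X - 1) / Real.log 2 := by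
        gcongr
      have hrc : r ω = p ω * a * b / (c * e) := rfl
      have e4 : p ω * (X - 1) / Real.log 2 = (r ω - p ω) / Real.log 2 := by
        rw [hrc, hXdef]
        ring
      linarith [e2, e3, e4]
  rw [mapEnt_eq_sum p (fun ω => (f ω, g ω)), mapEnt_eq_sum p k, mapEnt_eq_sum p f,
    mapEnt_eq_sum p g, ← Finset.sum_add_distrib, ← Finset.sum_add_distrib]
  calc ∑ ω : Ω, (-(p ω * Real.logb 2 (pmass p (fun ω' => (f ω', g ω')) ((fun ω' => (f ω', g ω')) ω)))
        + -(p ω * Real.logb 2 (pmass p k (k ω))))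
      ≤ ∑ ω : Ω, ((-(p ω * Real.logb 2 (pmass p f (f ω))) + -(p ω * Real.logb 2 (pmass p g (g ω))))
        + (r ω - p ω) / Real.log 2) := Finset.sum_le_sum fun ω _ => hterm ω
    _ = (∑ ω : Ω, (-(p ω * Real.logb 2 (pmass p f (f ω))) + -(p ω * Real.logb 2 (pmass p g (g ω)))))
        + (∑ ω, r ω - ∑ ω, p ω) / Real.log 2 := by
        rw [Finset.sum_add_distrib, ← Finset.sum_div, ← Finset.sum_sub_distrib]
    _ ≤ ∑ ω : Ω, (-(p ω * Real.logb 2 (pmass p f (f ω))) + -(p ω * Real.logb 2 (pmass p g (g ω)))) := by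
        have : (∑ ω, r ω - ∑ ω, p ω) / Real.log 2 ≤ 0 := by
          apply div_nonpos_of_nonpos_of_nonneg _ hlog2.le
          rw [hpsum]
          linarith [key]
        linarith [this]


lemma subf_coarser {F Ω : Type*} [Field F] [Fintype F] [Fintype Ω]
    {U U' : Submodule F (Ω → F)} (h : U ≤ U') (ω ω' : Ω)
    (heq : (fun u : U' => (u : Ω → F) ω) = (fun u : U' => (u : Ω → F) ω')) :
    (fun u : U => (u : Ω → F) ω) = (fun u : U => (u : Ω → F) ω') := by
  funext u
  exact congrFun heq ⟨(u : Ω → F), h u.2⟩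

open Classical in
lemma subEnt_mono {F Ω : Type*} [Field F] [Fintype F] [Fintype Ω]
    (p : Ω → ℝ) (hp : ∀ ω, 0 ≤ p ω) {U U' : Submodule F (Ω → F)} (h : U ≤ U') :
    subEnt p U ≤ subEnt p U' :=
  mapEnt_le_of_coarser p hp (fun ω ω' heq => subf_coarser h ω ω' heq)

open Classical in
lemma subEnt_sup_eq_pair {F Ω : Type*} [Field F] [Fintype F] [Fintype Ω]
    (p : Ω → ℝ) (hp : ∀ ω, 0 ≤ p ω) (U1 U2 : Submodule F (Ω → F)) :
    subEnt p (U1 ⊔ U2) = mapEnt p (fun ω =>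
      ((fun u : U1 => (u : Ω → F) ω), (fun u : U2 => (u : Ω → F) ω))) := by
  apply le_antisymm
  · refine mapEnt_le_of_coarser p hp ?_
    intro ω ω' heq
    funext w
    obtain ⟨y, hy, z, hz, hyz⟩ := Submodule.mem_sup.1 w.2
    have hyω : (y : Ω → F) ω = y ω' := congrFun (congrArg Prod.fst heq) ⟨y, hy⟩
    have hzω : (z : Ω → F) ω = z ω' := congrFun (congrArg Prod.snd heq) ⟨z, hz⟩
    show (w : Ω → F) ω = (w : Ω → F) ω'
    rw [← hyz]
    simp only [Pi.add_apply, hyω, hzω]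
  · refine mapEnt_le_of_coarser p hp ?_
    intro ω ω' heq
    have h1 := subf_coarser (le_sup_left : U1 ≤ U1 ⊔ U2) ω ω' heq
    have h2 := subf_coarser (le_sup_right : U2 ≤ U1 ⊔ U2) ω ω' heq
    simp only [Prod.mk.injEq]
    exact ⟨h1, h2⟩

open Classical in
lemma subEnt_submod {F Ω : Type*} [Field F] [Fintype F] [Fintype Ω]
    (p : Ω → ℝ) (hp : ∀ ω, 0 ≤ p ω) (hpsum : ∑ ω, p ω = 1)
    (U1 U2 : Submodule F (Ω → F)) :
    subEnt p (U1 ⊔ U2) + subEnt p (U1 ⊓ U2) ≤ subEnt p U1 + subEnt p U2 := by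
  rw [subEnt_sup_eq_pair p hp U1 U2]
  exact mapEnt_submod p hp hpsum _ _ _
    (fun ω ω' heq => subf_coarser (inf_le_left : U1 ⊓ U2 ≤ U1) ω ω' heq)
    (fun ω ω' heq => subf_coarser (inf_le_right : U1 ⊓ U2 ≤ U2) ω ω' heq)


/-- Fix a subspace `W0` of `V = span(X1,...,Xm)`. The set `S_{W0}` of subspaces `U ≤ V`
with `W0 ⊊ U` minimizing `H_N(U|W0)` is closed under subspace addition. -/
theorem stmt_5 {F Ω : Type*} [Field F] [Fintype F] [Fintype Ω]
    (p : Ω → ℝ) (hp : ∀ ω, 0 ≤ p ω) (hpsum : ∑ ω, p ω = 1)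
    {m : ℕ} (X : Fin m → (Ω → F)) (hX : LinearIndependent F X)
    (V : Submodule F (Ω → F)) (hV : V = Submodule.span F (Set.range X))
    (W0 : Submodule F (Ω → F)) (hW0 : W0 ≤ V)
    (U1 U2 : Submodule F (Ω → F)) (hU1V : U1 ≤ V) (hU2V : U2 ≤ V)
    (hU1 : W0 < U1) (hU2 : W0 < U2)
    (hmin1 : ∀ U : Submodule F (Ω → F), U ≤ V → W0 < U → condNE p U1 W0 ≤ condNE p U W0)
    (hmin2 : ∀ U : Submodule F (Ω → F), U ≤ V → W0 < U → condNE p U2 W0 ≤ condNE p U W0) :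
    W0 < U1 ⊔ U2 ∧
      ∀ U : Submodule F (Ω → F), U ≤ V → W0 < U →
        condNE p (U1 ⊔ U2) W0 ≤ condNE p U W0 := by
  have hWlt : W0 < U1 ⊔ U2 := lt_of_lt_of_le hU1 le_sup_left
  refine ⟨hWlt, fun U hUV hWU => ?_⟩
  have e1 : W0 ⊔ U1 = U1 := sup_eq_right.2 hU1.le
  have e2 : W0 ⊔ U2 = U2 := sup_eq_right.2 hU2.le
  have es : W0 ⊔ (U1 ⊔ U2) = U1 ⊔ U2 := sup_eq_right.2 hWlt.le
  have hd1 : (Module.finrank F ↥W0 : ℝ) < (Module.finrank F ↥U1 : ℝ) := by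
    exact_mod_cast Submodule.finrank_lt_finrank_of_lt hU1
  have hd2 : (Module.finrank F ↥W0 : ℝ) < (Module.finrank F ↥U2 : ℝ) := by
    exact_mod_cast Submodule.finrank_lt_finrank_of_lt hU2
  have hds : (Module.finrank F ↥W0 : ℝ) < (Module.finrank F ↥(U1 ⊔ U2) : ℝ) := by
    exact_mod_cast Submodule.finrank_lt_finrank_of_lt hWlt
  have dmod : (Module.finrank F ↥(U1 ⊔ U2) : ℝ) + (Module.finrank F ↥(U1 ⊓ U2) : ℝ)
      = (Module.finrank F ↥U1 : ℝ) + (Module.finrank F ↥U2 : ℝ) := by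
    exact_mod_cast Submodule.finrank_sup_add_finrank_inf_eq U1 U2
  have hsubmod : subEnt p (U1 ⊔ U2) + subEnt p (U1 ⊓ U2) ≤ subEnt p U1 + subEnt p U2 :=
    subEnt_submod p hp hpsum U1 U2
  have h1eq : subEnt p U1 - subEnt p W0
      = condNE p U1 W0 * ((Module.finrank F ↥U1 : ℝ) - (Module.finrank F ↥W0 : ℝ)) := by
    rw [condNE, e1, div_mul_cancel₀]
    exact sub_ne_zero_of_ne hd1.ne'
  have t2 : condNE p U1 W0 = condNE p U2 W0 :=
    le_antisymm (hmin1 U2 hU2V hU2) (hmin2 U1 hU1V hU1)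
  have h2eq : subEnt p U2 - subEnt p W0
      = condNE p U1 W0 * ((Module.finrank F ↥U2 : ℝ) - (Module.finrank F ↥W0 : ℝ)) := by
    rw [t2, condNE, e2, div_mul_cancel₀]
    exact sub_ne_zero_of_ne hd2.ne'
  have hiineq : condNE p U1 W0 *
        ((Module.finrank F ↥(U1 ⊓ U2) : ℝ) - (Module.finrank F ↥W0 : ℝ))
      ≤ subEnt p (U1 ⊓ U2) - subEnt p W0 := by
    rcases eq_or_lt_of_le (le_inf hU1.le hU2.le : W0 ≤ U1 ⊓ U2) with he | hlt
    · rw [← he]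
      simp
    · have hdi : (Module.finrank F ↥W0 : ℝ) < (Module.finrank F ↥(U1 ⊓ U2) : ℝ) := by
        exact_mod_cast Submodule.finrank_lt_finrank_of_lt hlt
      have h3 := hmin1 (U1 ⊓ U2) (le_trans inf_le_left hU1V) hlt
      have h4 : condNE p (U1 ⊓ U2) W0
          = (subEnt p (U1 ⊓ U2) - subEnt p W0) /
            ((Module.finrank F ↥(U1 ⊓ U2) : ℝ) - (Module.finrank F ↥W0 : ℝ)) := by
        rw [condNE, sup_eq_right.2 hlt.le]
      have h5 := h3.trans_eq h4
      rw [le_div_iff₀ (by linarith)] at h5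
      linarith
  have key : subEnt p (U1 ⊔ U2) - subEnt p W0
      ≤ condNE p U1 W0 *
        ((Module.finrank F ↥(U1 ⊔ U2) : ℝ) - (Module.finrank F ↥W0 : ℝ)) := by
    have hdsum : (Module.finrank F ↥(U1 ⊔ U2) : ℝ) - (Module.finrank F ↥W0 : ℝ)
        = ((Module.finrank F ↥U1 : ℝ) - (Module.finrank F ↥W0 : ℝ))
          + (((Module.finrank F ↥U2 : ℝ) - (Module.finrank F ↥W0 : ℝ))
            - ((Module.finrank F ↥(U1 ⊓ U2) : ℝ) - (Module.finrank F ↥W0 : ℝ))) := by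
      linarith [dmod]
    have hexp : condNE p U1 W0 *
          ((Module.finrank F ↥(U1 ⊔ U2) : ℝ) - (Module.finrank F ↥W0 : ℝ))
        = condNE p U1 W0 * ((Module.finrank F ↥U1 : ℝ) - (Module.finrank F ↥W0 : ℝ))
          + condNE p U1 W0 * ((Module.finrank F ↥U2 : ℝ) - (Module.finrank F ↥W0 : ℝ))
          - condNE p U1 W0 * ((Module.finrank F ↥(U1 ⊓ U2) : ℝ) - (Module.finrank F ↥W0 : ℝ)) := by
      rw [hdsum]; ring
    linarith [hsubmod, h1eq, h2eq, hiineq, hexp]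
  calc condNE p (U1 ⊔ U2) W0 ≤ condNE p U1 W0 := by
        rw [condNE, es, div_le_iff₀ (by linarith)]
        exact key
    _ ≤ condNE p U W0 := hmin1 U hUV hWU
end

section
/- Let {0}=W^(0) ⊊ W^(1) ⊊ ... ⊊ W^(r)=V be the normalized-entropy subspace chain. Then for every j, max over proper subspaces U1 ⊊ W^(j) of H_N(W^(j)|U1) equals H_N(W^(j)|W^(j-1)); i.e., the worst-case normalized conditional entropy of W^(j) given any proper subspace is attained at W^(j-1). -/
open scoped BigOperators

/-- `IsNEChain p V r W` says that `⊥ = W 0 ⊊ W 1 ⊊ ... ⊊ W r = V` is a strictly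
increasing chain of subspaces of `V` such that for each `j`: (1) among all subspaces
of `V` strictly containing `W j`, `W (j+1)` has the least normalized conditional
entropy conditioned on `W j`, and (2) any subspace of `V` strictly containing `W j`
achieving this minimum is contained in `W (j+1)`. -/
def IsNEChain {F Ω : Type*} [Field F] [Fintype F] [Fintype Ω]
    (p : Ω → ℝ) (V : Submodule F (Ω → F)) (r : ℕ) (W : ℕ → Submodule F (Ω → F)) : Prop :=
  W 0 = ⊥ ∧ W r = V ∧ (∀ j, j < r → W j < W (j + 1)) ∧ (∀ j, j ≤ r → W j ≤ V) ∧
  ∀ j, j < r →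
    (∀ U : Submodule F (Ω → F), U ≤ V → W j < U →
        condNE p (W (j + 1)) (W j) ≤ condNE p U (W j)) ∧
    (∀ U : Submodule F (Ω → F), U ≤ V → W j < U →
        condNE p U (W j) = condNE p (W (j + 1)) (W j) → U ≤ W (j + 1))

/-!
Write `c_i = H_N(W^(i+1) | W^(i))` and `g_c(U) = H(U) - c · dim U`; for `A ⊊ B`,
`H_N(B | A) ≤ c` iff `g_c(B) ≤ g_c(A)`. Minimality of each step makes both `W^(i)` and
`W^(i+1)` minimizers of `g_{c_i}` above `W^(i)`, which forces `c_0 ≤ c_1 ≤ ⋯`; so for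
`c = c_(j-1)` and `i < j`, `W^(i+1)` minimizes `g_c` on `[W^(i), W^(i+1)]`. Entropy is
submodular (conditional mutual information is nonnegative, by `log x ≥ 1 - 1/x`) and dimension
is modular, so `g_c` is submodular and `g_c(U ⊔ W^(i+1)) ≤ g_c(U ⊔ W^(i))`. Telescoping to
`W^(j)` gives `g_c(W^(j)) ≤ g_c(U)`, i.e. `H_N(W^(j) | U) ≤ c_(j-1)`.
-/

open Finset Real

section Entropy

variable {Ω α β γ : Type*} [Fintype Ω]

open Classical in
noncomputable def fiberWt (p : Ω → ℝ) (f : Ω → α) (a : α) : ℝ :=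
  ∑ ω ∈ univ.filter (fun ω => f ω = a), p ω

lemma fiberWt_nonneg {p : Ω → ℝ} (hp : ∀ ω, 0 ≤ p ω) (f : Ω → α) (a : α) :
    0 ≤ fiberWt p f a :=
  sum_nonneg fun ω _ => hp ω

lemma le_fiberWt {p : Ω → ℝ} (hp : ∀ ω, 0 ≤ p ω) (f : Ω → α) (ω : Ω) :
    p ω ≤ fiberWt p f (f ω) :=
  single_le_sum (fun ω _ => hp ω) (by simp)

lemma exists_eq_of_fiberWt_ne_zero {p : Ω → ℝ} {f : Ω → α} {a : α} (h : fiberWt p f a ≠ 0) :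
    ∃ ω, f ω = a := by
  classical
  obtain ⟨ω, hω, -⟩ := exists_ne_zero_of_sum_ne_zero h
  exact ⟨ω, (mem_filter.1 hω).2⟩

lemma sum_fiberWt_mul [Fintype α] (p : Ω → ℝ) (f : Ω → α) (φ : α → ℝ) :
    ∑ a, fiberWt p f a * φ a = ∑ ω, p ω * φ (f ω) := by
  classical
  rw [← sum_fiberwise univ f (fun ω => p ω * φ (f ω))]
  refine sum_congr rfl fun a _ => ?_
  rw [fiberWt, sum_mul]
  exact sum_congr rfl fun ω hω => by rw [(mem_filter.1 hω).2]

lemma sum_fiberWt [Fintype α] (p : Ω → ℝ) (f : Ω → α) : ∑ a, fiberWt p f a = ∑ ω, p ω := by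
  simpa using sum_fiberWt_mul p f 1

open Classical in
lemma fiberWt_comp [Fintype α] (p : Ω → ℝ) (f : Ω → α) (σ : α → γ) (z : γ) :
    fiberWt p (fun ω => σ (f ω)) z = ∑ x, if σ x = z then fiberWt p f x else 0 := by
  simpa [← mul_ite_zero, fiberWt, sum_filter] using
    (sum_fiberWt_mul p f fun x => if σ x = z then 1 else 0).symm

lemma mapEnt_eq_neg_sum [Fintype α] (p : Ω → ℝ) (f : Ω → α) :
    mapEnt p f = -∑ ω, p ω * logb 2 (fiberWt p f (f ω)) := by
  rw [← sum_fiberWt_mul p f fun a => logb 2 (fiberWt p f a), ← sum_neg_distrib]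
  rfl

lemma mapEnt_congr [Fintype α] [Fintype β] (p : Ω → ℝ) {f : Ω → α} {g : Ω → β}
    (h : ∀ ω ω', f ω' = f ω ↔ g ω' = g ω) : mapEnt p f = mapEnt p g := by
  classical
  simp only [mapEnt_eq_neg_sum, fiberWt]
  congr 1
  refine sum_congr rfl fun ω _ => ?_
  congr 3
  ext ω'
  simp only [mem_filter, mem_univ, true_and, h]

lemma sum_mul_ratio_le [Fintype α] [Fintype β] [Fintype γ] {p : Ω → ℝ} (hp : ∀ ω, 0 ≤ p ω)
    (f : Ω → α) (g : Ω → β) (σ : α → γ) (τ : β → γ) (hστ : ∀ ω, σ (f ω) = τ (g ω)) :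
    ∑ ω, p ω * (fiberWt p f (f ω) * fiberWt p g (g ω) /
      (fiberWt p (fun ω => (f ω, g ω)) (f ω, g ω) * fiberWt p (fun ω => σ (f ω)) (σ (f ω))))
      ≤ ∑ ω, p ω := by
  classical
  set wf := fiberWt p f
  set wg := fiberWt p g
  set wfg := fiberWt p fun ω => (f ω, g ω)
  set wh := fiberWt p fun ω => σ (f ω)
  have hwh : ∀ z, wh z = ∑ y, if τ y = z then wg y else 0 := by
    intro z
    simp only [wh, hστ]
    exact fiberWt_comp p g τ z
  rw [← sum_fiberWt_mul p (fun ω => (f ω, g ω)) fun t => wf t.1 * wg t.2 / (wfg t * wh (σ t.1))]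
  calc _ ≤ ∑ t : α × β, if τ t.2 = σ t.1 then wf t.1 * wg t.2 / wh (σ t.1) else 0 := by
        gcongr with t
        by_cases h0 : wfg t = 0
        · rw [show fiberWt p (fun ω => (f ω, g ω)) t = 0 from h0, zero_mul]
          split_ifs
          · exact div_nonneg (mul_nonneg (fiberWt_nonneg hp f _) (fiberWt_nonneg hp g _))
              (fiberWt_nonneg hp _ _)
          · exact le_rfl
        · obtain ⟨ω, rfl⟩ := exists_eq_of_fiberWt_ne_zero h0
          rw [if_pos (hστ ω).symm, mul_div_assoc', mul_div_mul_left _ _ h0]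
    _ = ∑ x, wf x / wh (σ x) * wh (σ x) := by
        rw [Fintype.sum_prod_type]
        refine sum_congr rfl fun x _ => ?_
        nth_rewrite 2 [hwh]
        rw [mul_sum]
        refine sum_congr rfl fun y _ => ?_
        split_ifs <;> ring
    _ ≤ ∑ x, wf x := by
        gcongr with x
        rcases eq_or_ne (wh (σ x)) 0 with h | h
        · simpa [h] using fiberWt_nonneg hp f x
        · rw [div_mul_cancel₀ _ h]
    _ = ∑ ω, p ω := sum_fiberWt p f

lemma one_sub_div_le_log_sub_log {u v : ℝ} (hu : 0 < u) (hv : 0 < v) :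
    1 - v / u ≤ log u - log v := by
  simpa [inv_div, log_div hu.ne' hv.ne'] using one_sub_inv_le_log_of_pos (div_pos hu hv)

-- `I(f; g | h) ≥ 0` for a common coarsening `h = σ ∘ f = τ ∘ g` of `f` and `g`.
lemma mapEnt_pair_add_mapEnt_le [Fintype α] [Fintype β] [Fintype γ] {p : Ω → ℝ}
    (hp : ∀ ω, 0 ≤ p ω) (f : Ω → α) (g : Ω → β) (σ : α → γ) (τ : β → γ)
    (hστ : ∀ ω, σ (f ω) = τ (g ω)) :
    mapEnt p (fun ω => (f ω, g ω)) + mapEnt p (fun ω => σ (f ω)) ≤ mapEnt p f + mapEnt p g := by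
  have hterm : ∀ ω, p ω - p ω * (fiberWt p f (f ω) * fiberWt p g (g ω) /
      (fiberWt p (fun ω => (f ω, g ω)) (f ω, g ω) * fiberWt p (fun ω => σ (f ω)) (σ (f ω)))) ≤
      p ω * (log (fiberWt p (fun ω => (f ω, g ω)) (f ω, g ω)) +
        log (fiberWt p (fun ω => σ (f ω)) (σ (f ω))) -
        log (fiberWt p f (f ω)) - log (fiberWt p g (g ω))) := by
    intro ω
    rcases (hp ω).eq_or_lt with h | h
    · simp [← h]
    have hf := h.trans_le (le_fiberWt hp f ω)
    have hg := h.trans_le (le_fiberWt hp g ω)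
    have hfg := h.trans_le (le_fiberWt hp (fun ω => (f ω, g ω)) ω)
    have hh := h.trans_le (le_fiberWt hp (fun ω => σ (f ω)) ω)
    rw [← mul_one_sub]
    refine mul_le_mul_of_nonneg_left ?_ h.le
    have := one_sub_div_le_log_sub_log (mul_pos hfg hh) (mul_pos hf hg)
    rw [log_mul hfg.ne' hh.ne', log_mul hf.ne' hg.ne'] at this
    linarith
  have hgibbs := (sub_nonneg.2 (sum_mul_ratio_le hp f g σ τ hστ)).trans
    ((sum_sub_distrib ..).symm.trans_le (sum_le_sum fun ω _ => hterm ω))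
  simp only [mul_add, mul_sub, sum_add_distrib, sum_sub_distrib] at hgibbs
  simp only [mapEnt_eq_neg_sum, logb, mul_div_assoc', ← sum_div]
  rw [← sub_nonneg]
  refine (div_nonneg hgibbs (log_nonneg one_le_two)).trans_eq ?_
  ring

end Entropy

section Subspace

variable {F Ω : Type*} [Field F]

def evalOn (U : Submodule F (Ω → F)) (ω : Ω) : U → F := fun u => (u : Ω → F) ω

lemma evalOn_eq_iff {U : Submodule F (Ω → F)} {ω ω' : Ω} :
    evalOn U ω' = evalOn U ω ↔
      U ≤ LinearMap.ker (LinearMap.proj (R := F) (φ := fun _ : Ω => F) ω' - LinearMap.proj ω) := by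
  simp [funext_iff, evalOn, SetLike.le_def, sub_eq_zero]

lemma finrank_sub_finrank_pos [Finite Ω] {A B : Submodule F (Ω → F)} (h : A < B) :
    0 < (Module.finrank F B : ℝ) - Module.finrank F A := by
  rw [sub_pos]
  exact_mod_cast Submodule.finrank_lt_finrank_of_lt h

variable [Fintype F] [Fintype Ω]

open Classical in
lemma subEnt_sup (p : Ω → ℝ) (A B : Submodule F (Ω → F)) :
    subEnt p (A ⊔ B) = mapEnt p (fun ω => (evalOn A ω, evalOn B ω)) :=
  mapEnt_congr p fun ω ω' => evalOn_eq_iff.trans <| by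
    rw [sup_le_iff, Prod.ext_iff, evalOn_eq_iff, evalOn_eq_iff]

open Classical in
lemma subEnt_submodular {p : Ω → ℝ} (hp : ∀ ω, 0 ≤ p ω) (A B : Submodule F (Ω → F)) :
    subEnt p (A ⊔ B) + subEnt p (A ⊓ B) ≤ subEnt p A + subEnt p B := by
  rw [subEnt_sup]
  exact mapEnt_pair_add_mapEnt_le hp (evalOn A) (evalOn B)
    (· ∘ Submodule.inclusion inf_le_left) (· ∘ Submodule.inclusion inf_le_right) fun ω => rfl

noncomputable def tiltedEnt (p : Ω → ℝ) (c : ℝ) (U : Submodule F (Ω → F)) : ℝ :=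
  subEnt p U - c * Module.finrank F U

lemma tiltedEnt_submodular {p : Ω → ℝ} (hp : ∀ ω, 0 ≤ p ω) (c : ℝ) (A B : Submodule F (Ω → F)) :
    tiltedEnt p c (A ⊔ B) + tiltedEnt p c (A ⊓ B) ≤ tiltedEnt p c A + tiltedEnt p c B := by
  have hdim : (Module.finrank F ↥(A ⊔ B) : ℝ) + Module.finrank F ↥(A ⊓ B) =
      Module.finrank F A + Module.finrank F B := by
    exact_mod_cast Submodule.finrank_sup_add_finrank_inf_eq A B
  have := subEnt_submodular hp A B
  simp only [tiltedEnt]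
  linear_combination this - c * hdim

lemma tiltedEnt_le_tiltedEnt_of_le {p : Ω → ℝ} {A B : Submodule F (Ω → F)} (hAB : A ≤ B)
    {c c' : ℝ} (hc : c ≤ c') (h : tiltedEnt p c B ≤ tiltedEnt p c A) :
    tiltedEnt p c' B ≤ tiltedEnt p c' A := by
  have hdim : (Module.finrank F A : ℝ) ≤ Module.finrank F B := by
    exact_mod_cast Submodule.finrank_mono hAB
  simp only [tiltedEnt] at h ⊢
  nlinarith

lemma condNE_of_le (p : Ω → ℝ) {A B : Submodule F (Ω → F)} (h : A ≤ B) :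
    condNE p B A = (subEnt p B - subEnt p A) /
      ((Module.finrank F B : ℝ) - Module.finrank F A) := by
  rw [condNE, sup_eq_right.2 h]

lemma condNE_le_iff {p : Ω → ℝ} {A B : Submodule F (Ω → F)} (h : A < B) {c : ℝ} :
    condNE p B A ≤ c ↔ tiltedEnt p c B ≤ tiltedEnt p c A := by
  rw [condNE_of_le p h.le, div_le_iff₀ (finrank_sub_finrank_pos h), tiltedEnt, tiltedEnt]
  constructor <;> intro <;> linarith

lemma le_condNE_iff {p : Ω → ℝ} {A B : Submodule F (Ω → F)} (h : A < B) {c : ℝ} :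
    c ≤ condNE p B A ↔ tiltedEnt p c A ≤ tiltedEnt p c B := by
  rw [condNE_of_le p h.le, le_div_iff₀ (finrank_sub_finrank_pos h), tiltedEnt, tiltedEnt]
  constructor <;> intro <;> linarith

lemma tiltedEnt_condNE {p : Ω → ℝ} {A B : Submodule F (Ω → F)} (h : A < B) :
    tiltedEnt p (condNE p B A) B = tiltedEnt p (condNE p B A) A :=
  le_antisymm ((condNE_le_iff h).1 le_rfl) ((le_condNE_iff h).1 le_rfl)

end Subspace

namespace IsNEChain

variable {F Ω : Type*} [Field F] [Fintype F] [Fintype Ω] {p : Ω → ℝ}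
  {V : Submodule F (Ω → F)} {r : ℕ} {W : ℕ → Submodule F (Ω → F)}

lemma lt_succ (h : IsNEChain p V r W) {i : ℕ} (hi : i < r) : W i < W (i + 1) :=
  h.2.2.1 i hi

lemma le_ambient (h : IsNEChain p V r W) {i : ℕ} (hi : i ≤ r) : W i ≤ V :=
  h.2.2.2.1 i hi

lemma tiltedEnt_le (h : IsNEChain p V r W) {i : ℕ} (hi : i < r) {U : Submodule F (Ω → F)}
    (hWU : W i ≤ U) (hUV : U ≤ V) :
    tiltedEnt p (condNE p (W (i + 1)) (W i)) (W i) ≤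
      tiltedEnt p (condNE p (W (i + 1)) (W i)) U := by
  rcases hWU.eq_or_lt with rfl | hlt
  · exact le_rfl
  · exact (le_condNE_iff hlt).1 ((h.2.2.2.2 i hi).1 U hUV hlt)

lemma condNE_le_condNE_succ (h : IsNEChain p V r W) {i : ℕ} (hi : i + 1 < r) :
    condNE p (W (i + 1)) (W i) ≤ condNE p (W (i + 2)) (W (i + 1)) := by
  have h₀ := h.lt_succ (i := i) (by omega)
  have h₁ := h.lt_succ hi
  rw [le_condNE_iff h₁, tiltedEnt_condNE h₀]
  exact h.tiltedEnt_le (by omega) (h₀.trans h₁).le (h.le_ambient hi)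

lemma condNE_mono (h : IsNEChain p V r W) {i k : ℕ} (hik : i ≤ k) (hk : k < r) :
    condNE p (W (i + 1)) (W i) ≤ condNE p (W (k + 1)) (W k) := by
  induction k, hik using Nat.le_induction with
  | base => exact le_rfl
  | succ k _ ih => exact (ih (by omega)).trans (h.condNE_le_condNE_succ hk)

lemma tiltedEnt_succ_le (h : IsNEChain p V r W) {i : ℕ} (hi : i < r) {c : ℝ}
    (hc : condNE p (W (i + 1)) (W i) ≤ c) {D : Submodule F (Ω → F)} (hWD : W i ≤ D)
    (hDW : D ≤ W (i + 1)) : tiltedEnt p c (W (i + 1)) ≤ tiltedEnt p c D := by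
  refine tiltedEnt_le_tiltedEnt_of_le hDW hc ?_
  rw [tiltedEnt_condNE (h.lt_succ hi)]
  exact h.tiltedEnt_le hi hWD (hDW.trans (h.le_ambient hi))

lemma tiltedEnt_sup_le (h : IsNEChain p V r W) (hp : ∀ ω, 0 ≤ p ω) {i : ℕ} (hi : i ≤ r) {c : ℝ}
    (hc : ∀ n < i, condNE p (W (n + 1)) (W n) ≤ c) (U : Submodule F (Ω → F)) :
    tiltedEnt p c (U ⊔ W i) ≤ tiltedEnt p c U := by
  induction i with
  | zero => rw [h.1, sup_bot_eq]
  | succ n ih =>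
    have hn : n < r := by omega
    have hsup : U ⊔ W n ⊔ W (n + 1) = U ⊔ W (n + 1) := by
      rw [sup_assoc, sup_eq_right.2 (h.lt_succ hn).le]
    have hinf := h.tiltedEnt_succ_le hn (hc n n.lt_succ_self) (D := (U ⊔ W n) ⊓ W (n + 1))
      (le_inf le_sup_right (h.lt_succ hn).le) inf_le_right
    have := tiltedEnt_submodular hp c (U ⊔ W n) (W (n + 1))
    rw [hsup] at this
    linarith [ih hn.le fun m hm => hc m (by omega)]

end IsNEChain

theorem stmt_9_general {F Ω : Type*} [Field F] [Fintype F] [Fintype Ω]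
    (p : Ω → ℝ) (hp : ∀ ω, 0 ≤ p ω)
    (V : Submodule F (Ω → F))
    (r : ℕ) (W : ℕ → Submodule F (Ω → F)) (hchain : IsNEChain p V r W)
    (j : ℕ) (hj1 : 1 ≤ j) (hjr : j ≤ r) :
    (∀ U1 : Submodule F (Ω → F), U1 < W j →
        condNE p (W j) U1 ≤ condNE p (W j) (W (j - 1))) ∧
      W (j - 1) < W j := by
  obtain ⟨k, rfl⟩ : ∃ k, j = k + 1 := ⟨j - 1, by omega⟩
  refine ⟨fun U1 hU1 => ?_, hchain.lt_succ hjr⟩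
  rw [condNE_le_iff hU1]
  simpa [sup_eq_right.2 hU1.le] using hchain.tiltedEnt_sup_le hp hjr
    (fun n hn => hchain.condNE_mono (Nat.le_of_lt_succ hn) hjr) U1

/-- Along the normalized-entropy subspace chain, for every `1 ≤ j ≤ r` the maximum of
`H_N(W^(j)|U1)` over proper subspaces `U1 ⊊ W^(j)` equals `H_N(W^(j)|W^(j-1))`,
i.e., the worst case is attained at `U1 = W^(j-1)`. -/
theorem stmt_9 {F Ω : Type*} [Field F] [Fintype F] [Fintype Ω]
    (p : Ω → ℝ) (hp : ∀ ω, 0 ≤ p ω) (hpsum : ∑ ω, p ω = 1)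
    {m : ℕ} (X : Fin m → (Ω → F)) (hX : LinearIndependent F X)
    (V : Submodule F (Ω → F)) (hV : V = Submodule.span F (Set.range X))
    (r : ℕ) (W : ℕ → Submodule F (Ω → F)) (hchain : IsNEChain p V r W)
    (j : ℕ) (hj1 : 1 ≤ j) (hjr : j ≤ r) :
    (∀ U1 : Submodule F (Ω → F), U1 < W j →
        condNE p (W j) U1 ≤ condNE p (W j) (W (j - 1))) ∧
      W (j - 1) < W j :=
  stmt_9_general p hp V r W hchain j hj1 hjr
end
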